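/- Let Λ be a finite set and Q a symmetric positive definite |Λ|×|Λ| matrix whose diagonal entries equal 1. Then for every η ∈ ℝ^Λ and ε ≥ 0, the pinned Gaussian partition function Z_ε[η] = ∫ exp(-½ φᵀQφ + ηᵀφ) ∏ᵢ(dφᵢ + ε δ₀(dφᵢ)) satisfies Z_ε[η] ≤ (1 + ε/(2π)^{1/2})^{|Λ|} · Z_0[η]. -/

import Mathlib

/-!
Integrate out one site at a time. As a function of a single coordinate `t = φᵢ`, with the others
frozen, the exponent is `b + c t - t² / 2` because `Qᵢᵢ = 1`, so the Lebesgue integral over `t` is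
`√(2π) e^{b + c² / 2} ≥ √(2π) e^b`, while the pinning atom `ε δ₀` contributes `ε e^b`. Hence adding
`ε δ₀` to one single-site measure costs at most a factor `1 + ε / √(2π)`, and by Tonelli these
factors multiply over the sites.
-/

open MeasureTheory Finset Function Real
open scoped ENNReal

section Marginal

variable {ι : Type*} [DecidableEq ι] {X : ι → Type*} [∀ i, MeasurableSpace (X i)]
  {μ ν : ∀ i, Measure (X i)} {f : (∀ i, X i) → ℝ≥0∞}

theorem lmarginal_const_mul (s : Finset ι) (c : ℝ≥0∞) (hf : Measurable f) :
    ∫⋯∫⁻_s, (fun y ↦ c * f y) ∂ν = fun x ↦ c * (∫⋯∫⁻_s, f ∂ν) x := by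
  ext x
  exact lintegral_const_mul c (hf.comp measurable_updateFinset)

variable [∀ i, SigmaFinite (ν i)]

theorem lintegral_lmarginal_update_comm (hf : Measurable f) {s : Finset ι} {i : ι} (hi : i ∉ s)
    (ρ : Measure (X i)) [SigmaFinite ρ] (x : ∀ i, X i) :
    ∫⁻ t, (∫⋯∫⁻_s, f ∂ν) (update x i t) ∂ρ
      = (∫⋯∫⁻_s, (fun y ↦ ∫⁻ t, f (update y i t) ∂ρ) ∂ν) x := by
  simp_rw [lmarginal_update_of_notMem hf hi]
  refine lintegral_lintegral_swap ?_
  exact (hf.comp (measurable_update'.comp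
    ((measurable_updateFinset.comp measurable_snd).prodMk measurable_fst))).aemeasurable

variable [∀ i, SigmaFinite (μ i)]

theorem lmarginal_le_prod_mul_lmarginal (hf : Measurable f) {C : ι → ℝ≥0∞}
    (hC : ∀ i x, ∫⁻ t, f (update x i t) ∂μ i ≤ C i * ∫⁻ t, f (update x i t) ∂ν i)
    (s : Finset ι) (x : ∀ i, X i) :
    (∫⋯∫⁻_s, f ∂μ) x ≤ (∏ i ∈ s, C i) * (∫⋯∫⁻_s, f ∂ν) x := by
  induction s using Finset.induction generalizing x with
  | empty => simp
  | insert i s hi ih =>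
    have hline : Measurable fun y ↦ ∫⁻ t, f (update y i t) ∂ν i :=
      (hf.comp measurable_update').lintegral_prod_right'
    calc (∫⋯∫⁻_insert i s, f ∂μ) x
        = ∫⁻ t, (∫⋯∫⁻_s, f ∂μ) (update x i t) ∂μ i := lmarginal_insert _ hf hi x
      _ ≤ ∫⁻ t, (∏ j ∈ s, C j) * (∫⋯∫⁻_s, f ∂ν) (update x i t) ∂μ i :=
        lintegral_mono fun t ↦ ih _
      _ = (∏ j ∈ s, C j) * (∫⋯∫⁻_s, (fun y ↦ ∫⁻ t, f (update y i t) ∂μ i) ∂ν) x := by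
        rw [lintegral_const_mul (f := fun t ↦ (∫⋯∫⁻_s, f ∂ν) (update x i t)) _
          ((hf.lmarginal ν).comp (measurable_update x)), lintegral_lmarginal_update_comm hf hi]
      _ ≤ (∏ j ∈ s, C j) * (∫⋯∫⁻_s, (fun y ↦ C i * ∫⁻ t, f (update y i t) ∂ν i) ∂ν) x := by
        gcongr
        exact lmarginal_mono (hC i) x
      _ = (∏ j ∈ insert i s, C j) * (∫⋯∫⁻_insert i s, f ∂ν) x := by
        rw [lmarginal_const_mul s _ hline, lmarginal_insert' _ hf hi, prod_insert hi]
        ring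

theorem lintegral_pi_le_prod_mul [Fintype ι] (hf : Measurable f) {C : ι → ℝ≥0∞}
    (hC : ∀ i x, ∫⁻ t, f (update x i t) ∂μ i ≤ C i * ∫⁻ t, f (update x i t) ∂ν i) :
    ∫⁻ x, f x ∂Measure.pi μ ≤ (∏ i, C i) * ∫⁻ x, f x ∂Measure.pi ν := by
  rcases isEmpty_or_nonempty (∀ i, X i) with h | ⟨⟨x⟩⟩
  · simp [lintegral_of_isEmpty]
  simp_rw [lintegral_eq_lmarginal_univ x]
  exact lmarginal_le_prod_mul_lmarginal hf hC univ x

theorem lintegral_pi_mono [Fintype ι] (hf : Measurable f) (hμν : ∀ i, μ i ≤ ν i) :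
    ∫⁻ x, f x ∂Measure.pi μ ≤ ∫⁻ x, f x ∂Measure.pi ν := by
  simpa using lintegral_pi_le_prod_mul hf (C := 1) fun i x ↦ by
    rw [Pi.one_apply, one_mul]
    exact lintegral_mono' (hμν i) le_rfl

end Marginal

section Pinning

variable {α : Type*} [MeasurableSpace α] [MeasurableSingletonClass α] {ρ : Measure α} {x₀ : α}
  {a c : ℝ≥0∞}

theorem lintegral_add_smul_dirac_le {g : α → ℝ≥0∞} (hc₀ : c ≠ 0) (hc : c ≠ ∞)
    (hg : c * g x₀ ≤ ∫⁻ x, g x ∂ρ) :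
    ∫⁻ x, g x ∂(ρ + a • Measure.dirac x₀) ≤ (1 + a / c) * ∫⁻ x, g x ∂ρ := by
  rw [lintegral_add_measure, lintegral_smul_measure, lintegral_dirac, add_mul, one_mul, smul_eq_mul]
  refine add_le_add le_rfl ?_
  calc a * g x₀ = a / c * (c * g x₀) := by rw [← mul_assoc, ENNReal.div_mul_cancel hc₀ hc]
    _ ≤ a / c * ∫⁻ x, g x ∂ρ := by gcongr

theorem lintegral_pi_add_smul_dirac_le {ι : Type*} [Fintype ι] [DecidableEq ι] [SigmaFinite ρ]
    (ha : a ≠ ∞) (hc₀ : c ≠ 0) (hc : c ≠ ∞) {f : (ι → α) → ℝ≥0∞} (hf : Measurable f)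
    (hfc : ∀ i x, c * f (update x i x₀) ≤ ∫⁻ t, f (update x i t) ∂ρ) :
    ∫⁻ x, f x ∂Measure.pi (fun _ ↦ ρ + a • Measure.dirac x₀)
      ≤ (1 + a / c) ^ Fintype.card ι * ∫⁻ x, f x ∂Measure.pi (fun _ ↦ ρ) := by
  have := Measure.smul_finite (Measure.dirac x₀) ha
  simpa [prod_const, card_univ] using lintegral_pi_le_prod_mul hf (C := fun _ ↦ 1 + a / c)
    fun i x ↦ lintegral_add_smul_dirac_le hc₀ hc (hfc i x)

end Pinning

theorem ENNReal.toReal_le_toReal_mul_of_le_of_le {a b c : ℝ≥0∞} (hba : b ≤ a) (hab : a ≤ c * b)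
    (hc : c ≠ ∞) : a.toReal ≤ c.toReal * b.toReal := by
  by_cases hb : b = ∞
  · simp only [top_le_iff.mp (hb ▸ hba), ENNReal.toReal_top]
    positivity
  · rw [← ENNReal.toReal_mul]
    exact ENNReal.toReal_mono (ENNReal.mul_ne_top hc hb) hab

theorem lintegral_exp_neg_sq_sub_div_two (c : ℝ) :
    ∫⁻ t, ENNReal.ofReal (exp (-(t - c) ^ 2 / 2)) = ENNReal.ofReal √(2 * π) := by
  rw [lintegral_sub_right_eq_self (fun t ↦ ENNReal.ofReal (exp (-t ^ 2 / 2))) c,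
    ← ofReal_integral_eq_lintegral_ofReal]
  · congr 1
    simpa [neg_div, div_eq_inv_mul, mul_comm] using integral_gaussian (1 / 2)
  · simpa [neg_div, div_eq_inv_mul, mul_comm] using
      integrable_exp_neg_mul_sq (b := 1 / 2) (by norm_num)
  · exact Filter.Eventually.of_forall fun t ↦ (exp_pos _).le

theorem ofReal_sqrt_two_pi_mul_le_lintegral_exp (b c : ℝ) :
    ENNReal.ofReal √(2 * π) * ENNReal.ofReal (exp b)
      ≤ ∫⁻ t, ENNReal.ofReal (exp (b + c * t - t ^ 2 / 2)) := by
  rw [← lintegral_exp_neg_sq_sub_div_two c, ← lintegral_mul_const' _ _ ENNReal.ofReal_ne_top]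
  refine lintegral_mono fun t ↦ ?_
  rw [← ENNReal.ofReal_mul (exp_pos _).le, ← exp_add]
  gcongr
  nlinarith [sq_nonneg c]

section GaussianExponent

variable {ι : Type*} [Fintype ι]

noncomputable def gaussianExponent (Q : Matrix ι ι ℝ) (η φ : ι → ℝ) : ℝ :=
  -(1 / 2) * (∑ i, ∑ j, Q i j * φ i * φ j) + ∑ i, η i * φ i

theorem measurable_gaussianExponent (Q : Matrix ι ι ℝ) (η : ι → ℝ) :
    Measurable (gaussianExponent Q η) := by
  unfold gaussianExponent
  fun_prop

variable [DecidableEq ι] {Q : Matrix ι ι ℝ} {i : ι}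

theorem gaussianExponent_update (hQ : Q i i = 1) (η φ : ι → ℝ) :
    ∃ c, ∀ t, gaussianExponent Q η (update φ i t)
      = gaussianExponent Q η (update φ i 0) + c * t - t ^ 2 / 2 := by
  set ψ := update φ i 0
  refine ⟨η i - (∑ k, Q i k * ψ k + ∑ j, Q j i * ψ j) / 2, fun t ↦ ?_⟩
  have hupd : update φ i t = fun j ↦ ψ j + if j = i then t else 0 := by
    ext j
    rcases eq_or_ne j i with rfl | hj <;> simp [ψ, *]
  simp only [gaussianExponent, hupd, mul_add, add_mul, sum_add_distrib, mul_ite, ite_mul, mul_zero,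
    zero_mul, sum_ite_irrel, sum_const_zero, sum_ite_eq', mem_univ, if_true, hQ]
  have hrow : ∑ k, Q i k * t * ψ k = t * ∑ k, Q i k * ψ k := by
    rw [mul_sum]; exact sum_congr rfl fun _ _ ↦ by ring
  rw [hrow, ← sum_mul]
  ring

theorem ofReal_sqrt_two_pi_mul_le_lintegral_update (hQ : Q i i = 1) (η φ : ι → ℝ) :
    ENNReal.ofReal √(2 * π) * ENNReal.ofReal (exp (gaussianExponent Q η (update φ i 0)))
      ≤ ∫⁻ t, ENNReal.ofReal (exp (gaussianExponent Q η (update φ i t))) := by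
  obtain ⟨c, hc⟩ := gaussianExponent_update hQ η φ
  exact (ofReal_sqrt_two_pi_mul_le_lintegral_exp _ c).trans_eq
    (lintegral_congr fun t ↦ by rw [hc t])

end GaussianExponent

theorem pinned_gaussian_partition_le_general {ι : Type*} [Fintype ι]
    (Q : Matrix ι ι ℝ)
    (hdiag : ∀ i, Q i i = 1) (η : ι → ℝ) (ε : ℝ) (hε : 0 ≤ ε) :
    (∫ φ : ι → ℝ,
        Real.exp (-(1 / 2) * (∑ i, ∑ j, Q i j * φ i * φ j) + ∑ i, η i * φ i)
        ∂(Measure.pi fun _ : ι => (volume + ENNReal.ofReal ε • Measure.dirac 0)))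
      ≤ (1 + ε / Real.sqrt (2 * Real.pi)) ^ Fintype.card ι *
        ∫ φ : ι → ℝ,
          Real.exp (-(1 / 2) * (∑ i, ∑ j, Q i j * φ i * φ j) + ∑ i, η i * φ i) := by
  classical
  change ∫ φ, exp (gaussianExponent Q η φ) ∂_ ≤ _ * ∫ φ, exp (gaussianExponent Q η φ)
  have hexp : Measurable fun φ ↦ exp (gaussianExponent Q η φ) :=
    (measurable_gaussianExponent Q η).exp
  have hf : Measurable fun φ ↦ ENNReal.ofReal (exp (gaussianExponent Q η φ)) :=
    ENNReal.measurable_ofReal.comp hexp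
  have hpos : ∀ ρ : Measure (ι → ℝ), 0 ≤ᵐ[ρ] fun φ ↦ exp (gaussianExponent Q η φ) :=
    fun ρ ↦ Filter.Eventually.of_forall fun φ ↦ (exp_pos _).le
  have hupper := lintegral_pi_add_smul_dirac_le (ENNReal.ofReal_ne_top (r := ε)) (by positivity)
    ENNReal.ofReal_ne_top hf
    fun i x ↦ ofReal_sqrt_two_pi_mul_le_lintegral_update (hdiag i) η x
  have := Measure.smul_finite (Measure.dirac (0 : ℝ)) (ENNReal.ofReal_ne_top (r := ε))
  -- needed when the integrals are infinite and the Bochner integrals take the junk value `0`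
  have hlower := lintegral_pi_mono hf fun _ ↦
    (Measure.le_add_right le_rfl : volume ≤ volume + ENNReal.ofReal ε • Measure.dirac (0 : ℝ))
  rw [integral_eq_lintegral_of_nonneg_ae (hpos _) hexp.aestronglyMeasurable,
    integral_eq_lintegral_of_nonneg_ae (hpos _) hexp.aestronglyMeasurable, volume_pi]
  convert ENNReal.toReal_le_toReal_mul_of_le_of_le hlower hupper (by finiteness) using 2
  rw [ENNReal.toReal_pow, ← ENNReal.ofReal_div_of_pos (by positivity), ← ENNReal.ofReal_one,
    ← ENNReal.ofReal_add zero_le_one (by positivity), ENNReal.toReal_ofReal (by positivity)]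

/-- Pinned Gaussian partition function bound: `Z_ε[η] ≤ (1 + ε/√(2π))^{|Λ|} Z_0[η]`. -/
theorem pinned_gaussian_partition_le {ι : Type*} [Fintype ι]
    (Q : Matrix ι ι ℝ) (hsym : Q.IsSymm) (hpos : Q.PosDef)
    (hdiag : ∀ i, Q i i = 1) (η : ι → ℝ) (ε : ℝ) (hε : 0 ≤ ε) :
    (∫ φ : ι → ℝ,
        Real.exp (-(1 / 2) * (∑ i, ∑ j, Q i j * φ i * φ j) + ∑ i, η i * φ i)
        ∂(Measure.pi fun _ : ι => (volume + ENNReal.ofReal ε • Measure.dirac 0)))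
      ≤ (1 + ε / Real.sqrt (2 * Real.pi)) ^ Fintype.card ι *
        ∫ φ : ι → ℝ,
          Real.exp (-(1 / 2) * (∑ i, ∑ j, Q i j * φ i * φ j) + ∑ i, η i * φ i) :=
  pinned_gaussian_partition_le_general Q hdiag η ε hε
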